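/- Let φ : ℝ⁵ → ℝ be C³, suppose that the function ℓ₁₁ := i·( L₁(Ā₁) − L̄₁(A₁) ) vanishes nowhere, and define the operator T f := ℓ₁₁·f_u. Then for j ∈ {1, 2} and every C² function f : ℝ⁵ → ℂ: [T, L_j] f = −P_j · (T f) and [T, L̄_j] f = −conj(P_j) · (T f), where P_j := ( (ℓ₁₁)_{z_j} + A_j·(ℓ₁₁)_u − ℓ₁₁·(A_j)_u ) / ℓ₁₁. (These are the bracket relations [T, L_j] = −P_j·T and [T, L̄_j] = −P̄_j·T of the paper's Summary for General Class IV₁.) -/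

import Mathlib

/-!
`L_j` and `L̄_j` both have the form `D + B ∂_u` with `D = (∂_a + c ∂_b)/2` a constant-coefficient
operator, which commutes with `∂_u` on `C²` functions (symmetry of second derivatives). For
`T = ℓ ∂_u` the second-order terms of the bracket therefore cancel, leaving
`[T, D + B ∂_u] = (ℓ B_u - D ℓ - B ℓ_u) ∂_u`, which is `-P_j T` after dividing by `ℓ ≠ 0`.
For `L̄_j` the coefficient obtained is the conjugate of `P_j` because `ℓ₁₁` is real:
`L̄₁(A₁)` is the conjugate of `w = L₁(Ā₁)`, so `ℓ₁₁ = i (w - w̄)`.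
-/

noncomputable section
open Complex ComplexConjugate

/-- Points of `ℝ⁵`, with coordinates `(x₁, y₁, x₂, y₂, u)`, `z₁ = x₁ + i y₁`,
`z₂ = x₂ + i y₂`. -/
abbrev V5 := Fin 5 → ℝ

/-- Partial derivative in the `j`-th coordinate direction. -/
def pd (j : Fin 5) (f : V5 → ℂ) : V5 → ℂ := fun p => fderiv ℝ f p (Pi.single j 1)

/-- Wirtinger derivative `f_{z₁} := (f_{x₁} − i f_{y₁})/2`. -/
def wz1 (f : V5 → ℂ) : V5 → ℂ := fun p => (pd 0 f p - I * pd 1 f p) / 2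

/-- Wirtinger derivative `f_{z̄₁} := (f_{x₁} + i f_{y₁})/2`. -/
def wzb1 (f : V5 → ℂ) : V5 → ℂ := fun p => (pd 0 f p + I * pd 1 f p) / 2

/-- Wirtinger derivative `f_{z₂} := (f_{x₂} − i f_{y₂})/2`. -/
def wz2 (f : V5 → ℂ) : V5 → ℂ := fun p => (pd 2 f p - I * pd 3 f p) / 2

/-- Wirtinger derivative `f_{z̄₂} := (f_{x₂} + i f_{y₂})/2`. -/
def wzb2 (f : V5 → ℂ) : V5 → ℂ := fun p => (pd 2 f p + I * pd 3 f p) / 2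

/-- Partial derivative `f_u`. -/
def du (f : V5 → ℂ) : V5 → ℂ := pd 4 f

/-- Complexification of a real-valued function. -/
def cl (φ : V5 → ℝ) : V5 → ℂ := fun p => (φ p : ℂ)

variable (φ : V5 → ℝ)

/-- The coefficient `A₁ := −φ_{z₁}/(i + φ_u)`. -/
def A1 : V5 → ℂ := fun p => -(wz1 (cl φ) p) / (I + du (cl φ) p)

/-- The coefficient `A₂ := −φ_{z₂}/(i + φ_u)`. -/
def A2 : V5 → ℂ := fun p => -(wz2 (cl φ) p) / (I + du (cl φ) p)

/-- The operator `L₁ f := f_{z₁} + A₁ f_u`. -/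
def L1 (f : V5 → ℂ) : V5 → ℂ := fun p => wz1 f p + A1 φ p * du f p

/-- The operator `L₂ f := f_{z₂} + A₂ f_u`. -/
def L2 (f : V5 → ℂ) : V5 → ℂ := fun p => wz2 f p + A2 φ p * du f p

/-- The conjugate operator `L̄₁ f := f_{z̄₁} + Ā₁ f_u`. -/
def Lb1 (f : V5 → ℂ) : V5 → ℂ := fun p => wzb1 f p + conj (A1 φ p) * du f p

/-- The conjugate operator `L̄₂ f := f_{z̄₂} + Ā₂ f_u`. -/
def Lb2 (f : V5 → ℂ) : V5 → ℂ := fun p => wzb2 f p + conj (A2 φ p) * du f p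

/-- The coefficient `A_j`, `j = 1, 2` (indexed by `Fin 2`). -/
def Aj (j : Fin 2) : V5 → ℂ := if j = 0 then A1 φ else A2 φ

/-- The Wirtinger derivative `f_{z_j}`, `j = 1, 2` (indexed by `Fin 2`). -/
def wzj (j : Fin 2) : (V5 → ℂ) → V5 → ℂ := if j = 0 then wz1 else wz2

/-- The operator `L_j`, `j = 1, 2` (indexed by `Fin 2`). -/
def Lj (j : Fin 2) : (V5 → ℂ) → V5 → ℂ := if j = 0 then L1 φ else L2 φ

/-- The conjugate operator `L̄_j`, `j = 1, 2` (indexed by `Fin 2`). -/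
def Lbj (j : Fin 2) : (V5 → ℂ) → V5 → ℂ := if j = 0 then Lb1 φ else Lb2 φ

/-- The function `ℓ_{jk} := i·( L_k(Ā_j) − L̄_j(A_k) )`. -/
def ell (j k : Fin 2) : V5 → ℂ := fun p =>
  I * (Lj φ k (fun q => conj (Aj φ j q)) p - Lbj φ j (Aj φ k) p)

/-- The operator `T f := ℓ₁₁·f_u`. -/
def Tof (f : V5 → ℂ) : V5 → ℂ := fun p => ell φ 0 0 p * du f p

/-- The coefficient `P_j := ( (ℓ₁₁)_{z_j} + A_j·(ℓ₁₁)_u − ℓ₁₁·(A_j)_u ) / ℓ₁₁`. -/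
def Pj (j : Fin 2) : V5 → ℂ := fun p =>
  (wzj j (ell φ 0 0) p + Aj φ j p * du (ell φ 0 0) p - ell φ 0 0 p * du (Aj φ j) p)
    / ell φ 0 0 p

section PartialDerivatives

variable {f g : V5 → ℂ} {p : V5}

lemma pd_add (m : Fin 5) (hf : DifferentiableAt ℝ f p) (hg : DifferentiableAt ℝ g p) :
    pd m (fun q => f q + g q) p = pd m f p + pd m g p := by
  simp [pd, fderiv_fun_add hf hg]

lemma pd_mul (m : Fin 5) (hf : DifferentiableAt ℝ f p) (hg : DifferentiableAt ℝ g p) :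
    pd m (fun q => f q * g q) p = pd m f p * g p + f p * pd m g p := by
  simp only [pd, fderiv_fun_mul hf hg, add_apply, smul_apply, smul_eq_mul]
  ring

lemma pd_conj (m : Fin 5) : pd m (fun q => conj (f q)) p = conj (pd m f p) :=
  congrArg (· (Pi.single m 1)) (fderiv_star (f := f) (x := p) (𝕜 := ℝ))

lemma conj_pd_of_real (m : Fin 5) (hreal : ∀ q, conj (f q) = f q) :
    conj (pd m f p) = pd m f p := by
  rw [← pd_conj m]
  simp only [hreal]

lemma ContDiff.pd {n k : WithTop ℕ∞} (m : Fin 5) (hf : ContDiff ℝ n f) (hk : k + 1 ≤ n) :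
    ContDiff ℝ k (pd m f) :=
  (hf.fderiv_right hk).clm_apply contDiff_const

lemma pd_pd_comm (hf : ContDiff ℝ 2 f) (m k : Fin 5) (p : V5) :
    pd m (pd k f) p = pd k (pd m f) p := by
  have hd : Differentiable ℝ (fderiv ℝ f) :=
    (hf.fderiv_right (m := 1) (by norm_num)).differentiable one_ne_zero
  have hpd (i l : Fin 5) :
      pd i (pd l f) p = fderiv ℝ (fderiv ℝ f) p (Pi.single i 1) (Pi.single l 1) := by
    change fderiv ℝ (fun q => fderiv ℝ f q (Pi.single l 1)) p _ = _
    simp [fderiv_clm_apply (hd p) (differentiableAt_const _)]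
  rw [hpd, hpd]
  exact hf.contDiffAt.isSymmSndFDerivAt (by simp [minSmoothness_of_isRCLikeNormedField]) _ _

end PartialDerivatives

/-- `f_{z_j}` and `f_{z̄_j}` are the cases `c = -i` and `c = i`, with `(a, b)` the indices of
`(x_j, y_j)`. -/
def wirt (a b : Fin 5) (c : ℂ) (f : V5 → ℂ) : V5 → ℂ := fun p => (pd a f p + c * pd b f p) / 2

def wirtField (a b : Fin 5) (c : ℂ) (B f : V5 → ℂ) : V5 → ℂ :=
  fun p => wirt a b c f p + B p * du f p

section WirtingerFields

variable {a b : Fin 5} {c : ℂ} {B f g ℓ : V5 → ℂ} {p : V5}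

lemma wirt_mul (hf : DifferentiableAt ℝ f p) (hg : DifferentiableAt ℝ g p) :
    wirt a b c (fun q => f q * g q) p = wirt a b c f p * g p + f p * wirt a b c g p := by
  simp only [wirt, pd_mul _ hf hg]
  ring

lemma conj_wirt : conj (wirt a b c f p) = wirt a b (conj c) (fun q => conj (f q)) p := by
  simp [wirt, pd_conj, map_ofNat]

lemma du_wirt (hf : ContDiff ℝ 2 f) : du (wirt a b c f) p = wirt a b c (du f) p := by
  have hpd (m : Fin 5) : Differentiable ℝ (pd m f) :=
    (hf.pd m (by norm_num)).differentiable one_ne_zero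
  change fderiv ℝ (fun q => (pd a f q + c * pd b f q) / 2) p _ = _
  have hsum : DifferentiableAt ℝ (fun q => pd a f q + c * pd b f q) p :=
    (hpd a p).add ((hpd b p).const_mul c)
  simp only [div_eq_mul_inv]
  rw [fderiv_mul_const hsum,
    fderiv_fun_add (hpd a p) ((hpd b p).const_mul c), fderiv_const_mul (hpd b p)]
  simp only [smul_add, add_apply, smul_apply, smul_eq_mul, wirt, du, div_eq_mul_inv]
  change 2⁻¹ * pd 4 (pd a f) p + 2⁻¹ * (c * pd 4 (pd b f) p) = _
  rw [pd_pd_comm hf 4 a, pd_pd_comm hf 4 b]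
  ring

lemma conj_wirtField :
    conj (wirtField a b c B f p)
      = wirtField a b (conj c) (fun q => conj (B q)) (fun q => conj (f q)) p := by
  simp [wirtField, conj_wirt, du, pd_conj]

lemma ContDiff.wirt {n k : WithTop ℕ∞} (hf : ContDiff ℝ n f) (hk : k + 1 ≤ n) :
    ContDiff ℝ k (wirt a b c f) :=
  ((hf.pd a hk).add (contDiff_const.mul (hf.pd b hk))).div_const 2

lemma ContDiff.wirtField {n k : WithTop ℕ∞} (hB : ContDiff ℝ k B) (hf : ContDiff ℝ n f)
    (hk : k + 1 ≤ n) :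
    ContDiff ℝ k (wirtField a b c B f) :=
  (hf.wirt hk).add (hB.mul (hf.pd 4 hk))

lemma mul_du_wirtField_sub (hB : DifferentiableAt ℝ B p) (hℓ : DifferentiableAt ℝ ℓ p)
    (hf : ContDiff ℝ 2 f) :
    ℓ p * du (wirtField a b c B f) p - wirtField a b c B (fun q => ℓ q * du f q) p
      = (ℓ p * du B p - wirt a b c ℓ p - B p * du ℓ p) * du f p := by
  have hfu : DifferentiableAt ℝ (du f) p := (hf.pd 4 (by norm_num)).differentiable one_ne_zero p
  have hwf : DifferentiableAt ℝ (wirt a b c f) p :=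
    (hf.wirt (by norm_num)).differentiable one_ne_zero p
  have hcomm : du (wirt a b c f) p = wirt a b c (du f) p := du_wirt hf
  unfold wirtField
  simp only [du] at hfu hcomm ⊢
  rw [pd_add 4 hwf (hB.fun_mul hfu), pd_mul 4 hB hfu, hcomm, wirt_mul hℓ hfu, pd_mul 4 hℓ hfu]
  ring

end WirtingerFields

section Coefficients

variable {φ}

lemma exists_wirt_repr (j : Fin 2) : ∃ a b : Fin 5, wzj j = wirt a b (-I) ∧
    Lj φ j = wirtField a b (-I) (Aj φ j) ∧
    Lbj φ j = wirtField a b I (fun q => conj (Aj φ j q)) := by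
  fin_cases j
  · refine ⟨0, 1, ?_, ?_, ?_⟩ <;> ext f p <;>
      simp only [wzj, Lj, Lbj, Aj, L1, Lb1, wz1, wzb1, wirtField, wirt, Fin.zero_eta,
        ↓reduceIte] <;> ring
  · refine ⟨2, 3, ?_, ?_, ?_⟩ <;> ext f p <;>
      simp only [wzj, Lj, Lbj, Aj, L2, Lb2, wz2, wzb2, wirtField, wirt, Fin.mk_one, one_ne_zero,
        ↓reduceIte] <;> ring

lemma Aj_eq (j : Fin 2) : Aj φ j = fun p => -(wzj j (cl φ) p) / (I + du (cl φ) p) := by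
  fin_cases j <;> rfl

lemma I_add_du_cl_ne_zero (p : V5) : I + du (cl φ) p ≠ 0 := by
  have hreal : conj (du (cl φ) p) = du (cl φ) p := conj_pd_of_real 4 fun q => conj_ofReal (φ q)
  intro h
  rw [eq_neg_of_add_eq_zero_right h] at hreal
  norm_num [Complex.ext_iff] at hreal

lemma contDiff_Aj {n k : WithTop ℕ∞} (hφ : ContDiff ℝ n φ) (hk : k + 1 ≤ n) (j : Fin 2) :
    ContDiff ℝ k (Aj φ j) := by
  obtain ⟨a, b, hwz, -, -⟩ := exists_wirt_repr (φ := φ) j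
  have hcl : ContDiff ℝ n (cl φ) := ofRealCLM.contDiff.comp hφ
  rw [Aj_eq, hwz]
  simp only [div_eq_mul_inv]
  exact (hcl.wirt hk).neg.mul ((contDiff_const.add (hcl.pd 4 hk)).inv I_add_du_cl_ne_zero)

lemma Lbj_eq_conj_Lj (j : Fin 2) (g : V5 → ℂ) (p : V5) :
    Lbj φ j g p = conj (Lj φ j (fun q => conj (g q)) p) := by
  obtain ⟨a, b, -, hL, hLb⟩ := exists_wirt_repr (φ := φ) j
  simp [hL, hLb, conj_wirtField]

lemma conj_ell_self (j : Fin 2) (p : V5) : conj (ell φ j j p) = ell φ j j p := by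
  simp only [ell, Lbj_eq_conj_Lj, map_mul, map_sub, conj_I, conj_conj]
  ring

lemma contDiff_ell {n k : WithTop ℕ∞} (hφ : ContDiff ℝ n φ) (hk : k + 1 + 1 ≤ n)
    (j l : Fin 2) :
    ContDiff ℝ k (ell φ j l) := by
  obtain ⟨a, b, -, hL, -⟩ := exists_wirt_repr (φ := φ) l
  obtain ⟨a', b', -, -, hLb⟩ := exists_wirt_repr (φ := φ) j
  have hA (i : Fin 2) : ContDiff ℝ (k + 1) (Aj φ i) := contDiff_Aj hφ hk i
  have hA' (i : Fin 2) : ContDiff ℝ k (Aj φ i) := (hA i).of_le le_self_add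
  rw [show ell φ j l = fun p => I * (Lj φ l (fun q => conj (Aj φ j q)) p - Lbj φ j (Aj φ l) p)
    from rfl, hL, hLb]
  exact contDiff_const.mul (((hA' l).wirtField (conjCLE.contDiff.comp (hA j)) le_rfl).sub
    ((conjCLE.contDiff.comp (hA' j)).wirtField (hA l) le_rfl))

end Coefficients

/-- The bracket relations `[T, L_j] = −P_j·T` and `[T, L̄_j] = −P̄_j·T` of the paper's
Summary for General Class IV₁. -/
theorem class_IV₁_brackets (hφ : ContDiff ℝ 3 φ) (hℓ : ∀ p, ell φ 0 0 p ≠ 0)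
    (j : Fin 2) :
    ∀ f : V5 → ℂ, ContDiff ℝ 2 f → ∀ p,
      (Tof φ (Lj φ j f) p - Lj φ j (Tof φ f) p = -(Pj φ j p) * Tof φ f p) ∧
      (Tof φ (Lbj φ j f) p - Lbj φ j (Tof φ f) p = -(conj (Pj φ j p)) * Tof φ f p) := by
  intro f hf p
  obtain ⟨a, b, hwz, hL, hLb⟩ := exists_wirt_repr (φ := φ) j
  have hℓd : DifferentiableAt ℝ (ell φ 0 0) p :=
    (contDiff_ell (k := 1) hφ (by norm_num) 0 0).differentiable one_ne_zero p
  have hA : ContDiff ℝ 1 (Aj φ j) := contDiff_Aj hφ (by norm_num) j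
  have hAd : DifferentiableAt ℝ (Aj φ j) p := hA.differentiable one_ne_zero p
  have hAd' : DifferentiableAt ℝ (fun q => conj (Aj φ j q)) p :=
    (conjCLE.contDiff.comp hA).differentiable one_ne_zero p
  have hPconj : conj (Pj φ j p) = (wirt a b I (ell φ 0 0) p
      + conj (Aj φ j p) * du (ell φ 0 0) p - ell φ 0 0 p * du (fun q => conj (Aj φ j q)) p)
      / ell φ 0 0 p := by
    simp only [Pj, hwz, map_div₀, map_sub, map_add, map_mul, conj_wirt, conj_ell_self, du,
      conj_pd_of_real 4 (conj_ell_self 0), pd_conj, map_neg, conj_I, neg_neg]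
  constructor <;> unfold Tof
  · rw [hL, mul_du_wirtField_sub hAd hℓd hf, Pj, hwz]
    field_simp [hℓ p]
    ring
  · rw [hLb, mul_du_wirtField_sub hAd' hℓd hf, hPconj]
    field_simp [hℓ p]
    ring

end
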